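/- Let β = (1+√5)/2, T_β(x) = βx mod 1, and suppose X has pdf f on [0,1). Then T_β^n(X) is absolutely continuous with pdf f_n given by: for 0 ≤ x < β^{−1}, f_n(x) = ∑_{J ∈ Ω_n} β^{−n} f(L_{n,J} + x β^{−n}), and for β^{−1} ≤ x < 1, f_n(x) = ∑_{J ∈ Ω_{n,0}} β^{−n} f(L_{n,J} + x β^{−n}). -/

import Mathlib

open MeasureTheory Real Filter

/-- The golden ratio. -/
noncomputable def gr : ℝ := (1 + Real.sqrt 5) / 2

/-- Binary strings of length `n` with no two consecutive ones. -/
def Omega (n : ℕ) : Finset (Fin n → Fin 2) :=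
  Finset.univ.filter fun J =>
    ∀ k : Fin n, ∀ h : k.val + 1 < n, (J k : ℕ) * (J ⟨k.val + 1, h⟩ : ℕ) = 0

/-- `L (j_1,…,j_n) = ∑ j_k β^{-k}`. -/
noncomputable def L {n : ℕ} (J : Fin n → Fin 2) : ℝ :=
  ∑ k : Fin n, ((J k : ℕ) : ℝ) * gr ^ (-(k.val + 1 : ℤ))

/-- The last digit `j_n` of a string. -/
def lastD {n : ℕ} (J : Fin n → Fin 2) : ℕ :=
  if h : 0 < n then (J ⟨n - 1, Nat.sub_lt h one_pos⟩ : ℕ) else 0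

/-- The length of `I_{n,J}`. -/
noncomputable def Ilen {n : ℕ} (J : Fin n → Fin 2) : ℝ :=
  (lastD J : ℝ) * gr ^ (-(n + 1 : ℤ)) + (1 - (lastD J : ℝ)) * gr ^ (-(n : ℤ))

/-- The interval `I_{n,J}`. -/
noncomputable def Ival {n : ℕ} (J : Fin n → Fin 2) : Set ℝ :=
  Set.Ico (L J) (L J + Ilen J)

/-- The base-β transformation (β = golden ratio). -/
noncomputable def T (x : ℝ) : ℝ := gr * x - ⌊gr * x⌋

/-- The invariant density. -/
noncomputable def fGold (x : ℝ) : ℝ :=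
  if x < gr⁻¹ then (1 + gr) / Real.sqrt 5 else gr / Real.sqrt 5

/-- The pdf of `T^n X` when `X` has pdf `f`. -/
noncomputable def evolve (n : ℕ) (f : ℝ → ℝ) (x : ℝ) : ℝ :=
  if x < gr⁻¹ then ∑ J ∈ Omega n, gr ^ (-(n : ℤ)) * f (L J + x * gr ^ (-(n : ℤ)))
  else ∑ J ∈ (Omega n).filter (fun J => lastD J = 0),
    gr ^ (-(n : ℤ)) * f (L J + x * gr ^ (-(n : ℤ)))

open scoped ENNReal

set_option linter.unusedVariables false

lemma snoc_mk_lt {m : ℕ} (J : Fin m → Fin 2) (j : Fin 2) (i : ℕ) (hi : i < m)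
    (hi' : i < m + 1) : (Fin.snoc J j : Fin (m+1) → Fin 2) ⟨i, hi'⟩ = J ⟨i, hi⟩ := by
  have h : (⟨i, hi'⟩ : Fin (m+1)) = Fin.castSucc ⟨i, hi⟩ := rfl
  rw [h, Fin.snoc_castSucc]

lemma snoc_mk_last {m : ℕ} (J : Fin m → Fin 2) (j : Fin 2) (hm : m < m + 1) :
    (Fin.snoc J j : Fin (m+1) → Fin 2) ⟨m, hm⟩ = j := by
  have h : (⟨m, hm⟩ : Fin (m+1)) = Fin.last m := rfl
  rw [h, Fin.snoc_last]

lemma lastD_succ {m : ℕ} (J : Fin (m+1) → Fin 2) : lastD J = (J (Fin.last m) : ℕ) := by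
  rw [lastD, dif_pos (Nat.succ_pos m)]
  rfl

lemma lastD_snoc {m : ℕ} (J : Fin m → Fin 2) (j : Fin 2) :
    lastD (Fin.snoc J j) = (j : ℕ) := by
  rw [lastD_succ, Fin.snoc_last]

lemma mem_omega_snoc {m : ℕ} (J : Fin m → Fin 2) (j : Fin 2) :
    Fin.snoc J j ∈ Omega (m+1) ↔ J ∈ Omega m ∧ lastD J * (j : ℕ) = 0 := by
  simp only [Omega, Finset.mem_filter, Finset.mem_univ, true_and]
  constructor
  · intro H
    refine ⟨fun k h => ?_, ?_⟩
    · have h' : (⟨k.val, Nat.lt_succ_of_lt k.isLt⟩ : Fin (m+1)).val + 1 < m + 1 :=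
        Nat.lt_succ_of_lt h
      have := H ⟨k.val, Nat.lt_succ_of_lt k.isLt⟩ h'
      rw [snoc_mk_lt J j k.val k.isLt, snoc_mk_lt J j (k.val + 1) h] at this
      exact this
    · rcases Nat.eq_zero_or_pos m with hm | hm
      · subst hm; rw [lastD, dif_neg (lt_irrefl 0)]; ring
      · have hlt : m - 1 < m + 1 := by omega
        have h' : (⟨m - 1, hlt⟩ : Fin (m+1)).val + 1 < m + 1 := by simp; omega
        have := H ⟨m - 1, hlt⟩ h'
        rw [snoc_mk_lt J j (m-1) (by omega)] at this
        have he : (⟨(⟨m - 1, hlt⟩ : Fin (m+1)).val + 1, h'⟩ : Fin (m+1)) = ⟨m, by omega⟩ := by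
          apply Fin.ext; simp; omega
        rw [he, snoc_mk_last] at this
        rw [lastD, dif_pos hm]
        exact this
  · rintro ⟨H1, H2⟩ k h
    have hk : k.val < m + 1 := k.isLt
    have ek : k = (⟨k.val, hk⟩ : Fin (m+1)) := rfl
    rcases Nat.lt_or_ge (k.val + 1) m with h2 | h2
    · have hkm : k.val < m := by omega
      have v1 : (Fin.snoc J j : Fin (m+1) → Fin 2) k = J ⟨k.val, hkm⟩ :=
        snoc_mk_lt J j k.val hkm k.isLt
      rw [v1, snoc_mk_lt J j (k.val + 1) h2]
      exact H1 ⟨k.val, hkm⟩ h2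
    · have hm : k.val + 1 = m := by omega
      have hkm : k.val < m := by omega
      have he : (⟨k.val + 1, h⟩ : Fin (m+1)) = ⟨m, by omega⟩ := by
        apply Fin.ext; simp; omega
      have v1 : (Fin.snoc J j : Fin (m+1) → Fin 2) k = J ⟨k.val, hkm⟩ :=
        snoc_mk_lt J j k.val hkm k.isLt
      rw [v1, he, snoc_mk_last]
      have hl : lastD J = (J ⟨k.val, hkm⟩ : ℕ) := by
        have hidx : (⟨m - 1, Nat.sub_lt (by omega) one_pos⟩ : Fin m) = ⟨k.val, hkm⟩ :=
          Fin.ext (by show m - 1 = k.val; omega)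
        rw [lastD, dif_pos (by omega : 0 < m), hidx]
      rw [← hl]
      exact H2

lemma snoc_inj_on {m : ℕ} (j : Fin 2) {J K : Fin m → Fin 2}
    (h : (Fin.snoc J j : Fin (m+1) → Fin 2) = (Fin.snoc K j : Fin (m+1) → Fin 2)) : J = K := by
  have h1 : Fin.init (Fin.snoc J j : Fin (m+1) → Fin 2)
      = Fin.init (Fin.snoc K j : Fin (m+1) → Fin 2) := by rw [h]
  rwa [Fin.init_snoc, Fin.init_snoc] at h1

lemma fin2_cases (j : Fin 2) : j = 0 ∨ j = 1 := by omega

lemma omega_succ_eq (m : ℕ) :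
    Omega (m+1) = ((Omega m).image (fun J => Fin.snoc J (0 : Fin 2))) ∪
      (((Omega m).filter (fun J => lastD J = 0)).image (fun J => Fin.snoc J (1 : Fin 2))) := by
  ext J'
  simp only [Finset.mem_union, Finset.mem_image, Finset.mem_filter]
  constructor
  · intro h
    have hJ' : Fin.snoc (Fin.init J') (J' (Fin.last m)) = J' := Fin.snoc_init_self J'
    rw [← hJ', mem_omega_snoc] at h
    obtain ⟨h1, h2⟩ := h
    rcases fin2_cases (J' (Fin.last m)) with hj | hj
    · left; exact ⟨Fin.init J', h1, by rw [← hj]; exact hJ'⟩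
    · right
      refine ⟨Fin.init J', ⟨h1, ?_⟩, by rw [← hj]; exact hJ'⟩
      rw [hj] at h2; simpa using h2
  · rintro (⟨J, hJ, rfl⟩ | ⟨J, ⟨hJ, hl⟩, rfl⟩)
    · rw [mem_omega_snoc]; exact ⟨hJ, by simp⟩
    · rw [mem_omega_snoc]; exact ⟨hJ, by simp [hl]⟩

lemma omega_succ_disj (m : ℕ) :
    Disjoint ((Omega m).image (fun J => (Fin.snoc J 0 : Fin (m+1) → Fin 2)))
      (((Omega m).filter (fun J => lastD J = 0)).image
        (fun J => (Fin.snoc J 1 : Fin (m+1) → Fin 2))) := by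
  rw [Finset.disjoint_left]
  rintro x hx0 hx1
  simp only [Finset.mem_image, Finset.mem_filter] at hx0 hx1
  obtain ⟨J, _, rfl⟩ := hx0
  obtain ⟨K, _, hK⟩ := hx1
  have := congrFun hK (Fin.last m)
  simp [Fin.snoc_last] at this

lemma sum_omega_succ {M : Type*} [AddCommMonoid M] (m : ℕ) (F : (Fin (m+1) → Fin 2) → M) :
    ∑ J' ∈ Omega (m+1), F J' =
      (∑ J ∈ Omega m, F (Fin.snoc J 0)) +
      ∑ J ∈ (Omega m).filter (fun J => lastD J = 0), F (Fin.snoc J 1) := by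
  rw [omega_succ_eq, Finset.sum_union (omega_succ_disj m),
    Finset.sum_image (fun x _ y _ h => snoc_inj_on 0 h),
    Finset.sum_image (fun x _ y _ h => snoc_inj_on 1 h)]

lemma omega_succ_filter (m : ℕ) :
    (Omega (m+1)).filter (fun J => lastD J = 0) =
      (Omega m).image (fun J => Fin.snoc J (0 : Fin 2)) := by
  ext J'
  simp only [Finset.mem_image, Finset.mem_filter]
  constructor
  · rintro ⟨h, hl⟩
    have hJ' : Fin.snoc (Fin.init J') (J' (Fin.last m)) = J' := Fin.snoc_init_self J'
    rw [← hJ', mem_omega_snoc] at h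
    have hj : J' (Fin.last m) = 0 := by
      rw [lastD_succ] at hl; omega
    refine ⟨Fin.init J', h.1, by rw [← hj]; exact hJ'⟩
  · rintro ⟨J, hJ, rfl⟩
    refine ⟨(mem_omega_snoc J 0).mpr ⟨hJ, mul_eq_zero_of_right _ rfl⟩, by simp [lastD_snoc]⟩

lemma sum_omega_succ_filter {M : Type*} [AddCommMonoid M] (m : ℕ)
    (F : (Fin (m+1) → Fin 2) → M) :
    ∑ J' ∈ (Omega (m+1)).filter (fun J => lastD J = 0), F J' =
      ∑ J ∈ Omega m, F (Fin.snoc J 0) := by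
  rw [omega_succ_filter, Finset.sum_image (fun x _ y _ h => snoc_inj_on 0 h)]

lemma L_snoc {m : ℕ} (J : Fin m → Fin 2) (j : Fin 2) :
    L (Fin.snoc J j) = L J + (j : ℕ) * gr ^ (-(m + 1 : ℤ)) := by
  unfold L
  rw [Fin.sum_univ_castSucc]
  congr 1
  · refine Finset.sum_congr rfl fun k _ => ?_
    rw [Fin.snoc_castSucc]
    norm_num
  · rw [Fin.snoc_last]
    norm_num

lemma sqrt5_gt : (2:ℝ) < Real.sqrt 5 := by
  have h : (2:ℝ) = Real.sqrt 4 := by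
    rw [show (4:ℝ) = 2^2 by norm_num, Real.sqrt_sq (by norm_num : (0:ℝ) ≤ 2)]
  rw [h]; exact Real.sqrt_lt_sqrt (by norm_num) (by norm_num)

lemma sqrt5_lt : Real.sqrt 5 < 3 := by
  have h : (3:ℝ) = Real.sqrt 9 := by
    rw [show (9:ℝ) = 3^2 by norm_num, Real.sqrt_sq (by norm_num : (0:ℝ) ≤ 3)]
  rw [h]; exact Real.sqrt_lt_sqrt (by norm_num) (by norm_num)

lemma gr_gt_one : 1 < gr := by unfold gr; nlinarith [sqrt5_gt]
lemma gr_pos : 0 < gr := lt_trans one_pos gr_gt_one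
lemma gr_ne : gr ≠ 0 := ne_of_gt gr_pos
lemma gr_lt_two : gr < 2 := by unfold gr; nlinarith [sqrt5_lt]
lemma gr_sq : gr ^ 2 = gr + 1 := by
  unfold gr
  linear_combination (Real.sq_sqrt (by norm_num : (0:ℝ) ≤ 5)) / 4
lemma grinv_eq : gr⁻¹ = gr - 1 := by
  refine inv_eq_of_mul_eq_one_right ?_
  nlinarith [gr_sq]
lemma grinv_pos : 0 < gr⁻¹ := inv_pos.mpr gr_pos
lemma grinv_lt_one : gr⁻¹ < 1 := by rw [grinv_eq]; linarith [gr_lt_two]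
lemma grinv_nonneg : (0:ℝ) ≤ gr⁻¹ := le_of_lt grinv_pos
lemma gr_mul_inv : gr * gr⁻¹ = 1 := mul_inv_cancel₀ gr_ne
lemma grinv_add_sq : gr⁻¹ + gr⁻¹ * gr⁻¹ = 1 := by
  rw [grinv_eq]; nlinarith [gr_sq]

lemma omega_zero : Omega 0 = Finset.univ := by
  unfold Omega
  rw [Finset.filter_true_of_mem]
  intro J _
  exact fun k h => k.elim0

lemma evolve_zero (f : ℝ → ℝ) : evolve 0 f = f := by
  funext x
  unfold evolve
  have hfil : (Omega 0).filter (fun J => lastD J = 0) = Omega 0 := by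
    apply Finset.filter_true_of_mem
    intro J _
    rw [lastD, dif_neg (lt_irrefl 0)]
  rw [hfil, omega_zero]
  have huniv : (Finset.univ : Finset (Fin 0 → Fin 2)) = {fun k => k.elim0} := by
    apply Finset.eq_singleton_iff_unique_mem.mpr
    exact ⟨Finset.mem_univ _, fun J _ => funext fun k => k.elim0⟩
  rw [huniv, Finset.sum_singleton]
  have hL : L (fun k : Fin 0 => k.elim0) = 0 := by
    unfold L; simp
  rw [hL]
  norm_num

lemma evolve_nonneg (f : ℝ → ℝ) (hf0 : ∀ x, 0 ≤ f x) (n : ℕ) (x : ℝ) :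
    0 ≤ evolve n f x := by
  unfold evolve
  split_ifs <;>
    exact Finset.sum_nonneg fun J _ =>
      mul_nonneg (zpow_nonneg (le_of_lt gr_pos) _) (hf0 _)

lemma evolve_measurable (f : ℝ → ℝ) (hf : Measurable f) (n : ℕ) :
    Measurable (evolve n f) := by
  unfold evolve
  apply Measurable.ite (measurableSet_lt measurable_id measurable_const)
  · apply Finset.measurable_sum
    intro J _
    exact (hf.comp ((measurable_id.mul_const _).const_add (L J))).const_mul _
  · apply Finset.measurable_sum
    intro J _
    exact (hf.comp ((measurable_id.mul_const _).const_add (L J))).const_mul _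

lemma evolve_succ (f : ℝ → ℝ) (m : ℕ) (x : ℝ) (hx0 : 0 ≤ x) (hx1 : x < 1) :
    evolve (m+1) f x = gr⁻¹ * evolve m f (gr⁻¹ * x) +
      (if x < gr⁻¹ then gr⁻¹ * evolve m f (gr⁻¹ * (x + 1)) else 0) := by
  have hc : gr ^ (-((m:ℕ)+1 : ℤ)) = gr⁻¹ * gr ^ (-(m : ℤ)) := by
    rw [show (-((m:ℕ)+1 : ℤ)) = (-1) + (-(m:ℤ)) by ring, zpow_add₀ gr_ne, zpow_neg_one]
  have hcast : (-((m+1 : ℕ) : ℤ)) = (-((m:ℕ)+1 : ℤ)) := by push_cast; ring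
  have hb1 : gr⁻¹ * x < gr⁻¹ := by
    calc gr⁻¹ * x < gr⁻¹ * 1 := by exact mul_lt_mul_of_pos_left hx1 grinv_pos
    _ = gr⁻¹ := mul_one _
  have hb2 : ¬ (gr⁻¹ * (x + 1) < gr⁻¹) := by
    push_neg
    calc gr⁻¹ = gr⁻¹ * 1 := (mul_one _).symm
    _ ≤ gr⁻¹ * (x + 1) := by apply mul_le_mul_of_nonneg_left (by linarith) grinv_nonneg
  unfold evolve
  rw [if_pos hb1, if_neg hb2, hcast, hc]
  split_ifs with hx
  · rw [sum_omega_succ]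
    congr 1
    · rw [Finset.mul_sum]
      refine Finset.sum_congr rfl fun J _ => ?_
      rw [L_snoc]
      have harg : L J + ((0:Fin 2):ℕ) * gr ^ (-(↑m + 1 : ℤ)) + x * (gr⁻¹ * gr ^ (-(m:ℤ)))
          = L J + gr⁻¹ * x * gr ^ (-(m:ℤ)) := by
        rw [Fin.val_zero]; push_cast; ring
      rw [harg]
      ring
    · rw [Finset.mul_sum]
      refine Finset.sum_congr rfl fun J _ => ?_
      rw [L_snoc]
      have harg : L J + ((1:Fin 2):ℕ) * gr ^ (-(↑m + 1 : ℤ)) + x * (gr⁻¹ * gr ^ (-(m:ℤ)))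
          = L J + gr⁻¹ * (x + 1) * gr ^ (-(m:ℤ)) := by
        rw [Fin.val_one, hc]; push_cast; ring
      rw [harg]
      ring
  · rw [sum_omega_succ_filter, add_zero, Finset.mul_sum]
    refine Finset.sum_congr rfl fun J _ => ?_
    rw [L_snoc]
    have harg : L J + ((0:Fin 2):ℕ) * gr ^ (-(↑m + 1 : ℤ)) + x * (gr⁻¹ * gr ^ (-(m:ℤ)))
        = L J + gr⁻¹ * x * gr ^ (-(m:ℤ)) := by
      rw [Fin.val_zero]; push_cast; ring
    rw [harg]
    ring

lemma T_measurable : Measurable T := by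
  unfold T
  apply (measurable_const_mul gr).sub
  exact Measurable.comp (by measurability) (measurable_id.const_mul gr).floor

lemma T_eq0 {x : ℝ} (h0 : 0 ≤ x) (h1 : x < gr⁻¹) : T x = gr * x := by
  unfold T
  have hfl : ⌊gr * x⌋ = 0 := by
    rw [Int.floor_eq_zero_iff]
    constructor
    · exact mul_nonneg (le_of_lt gr_pos) h0
    · calc gr * x < gr * gr⁻¹ := mul_lt_mul_of_pos_left h1 gr_pos
        _ = 1 := gr_mul_inv
  rw [hfl]; simp

lemma T_eq1 {x : ℝ} (h0 : gr⁻¹ ≤ x) (h1 : x < 1) : T x = gr * x + (-1) := by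
  unfold T
  have hfl : ⌊gr * x⌋ = 1 := by
    rw [Int.floor_eq_iff]
    constructor
    · calc ((1:ℤ):ℝ) = gr * gr⁻¹ := by rw [gr_mul_inv]; norm_num
        _ ≤ gr * x := mul_le_mul_of_nonneg_left h0 (le_of_lt gr_pos)
    · calc gr * x < gr * 1 := mul_lt_mul_of_pos_left h1 gr_pos
        _ < ((1:ℤ):ℝ) + 1 := by rw [mul_one]; push_cast; linarith [gr_lt_two]
  rw [hfl]; push_cast; ring

lemma affine_emb (a b : ℝ) (ha : a ≠ 0) :
    MeasurableEmbedding (fun x : ℝ => a * x + b) :=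
  ((Homeomorph.mulLeft₀ a ha).trans (Homeomorph.addRight b)).measurableEmbedding

lemma map_affine (a b : ℝ) (ha : a ≠ 0) :
    Measure.map (fun x : ℝ => a * x + b) volume = ENNReal.ofReal |a⁻¹| • volume := by
  have hcomp : (fun x : ℝ => a * x + b) = (fun y : ℝ => y + b) ∘ (fun x : ℝ => a * x) := rfl
  rw [hcomp, ← Measure.map_map (measurable_add_const b) (measurable_const_mul a),
    Real.map_volume_mul_left ha, Measure.map_smul, map_add_right_eq_self]

lemma map_withDensity_emb {g : ℝ → ℝ} (hg : MeasurableEmbedding g) {F : ℝ → ℝ≥0∞}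
    (hF : Measurable F) (μ : Measure ℝ) :
    (μ.withDensity (fun x => F (g x))).map g = (μ.map g).withDensity F := by
  ext s hs
  rw [hg.map_apply, withDensity_apply _ (hg.measurable hs), withDensity_apply _ hs,
    setLIntegral_map hs hF hg.measurable]

lemma branch (a b : ℝ) (ha : 0 < a) (F : ℝ → ℝ≥0∞) (hF : Measurable F)
    (s : Set ℝ) (hs : MeasurableSet s) :
    Measure.map (fun x : ℝ => a * x + b)
        ((volume.restrict ((fun x : ℝ => a * x + b) ⁻¹' s)).withDensity F)
      = (volume.restrict s).withDensity
          (fun y => ENNReal.ofReal a⁻¹ * F (a⁻¹ * (y - b))) := by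
  have hemb := affine_emb a b ha.ne'
  have hG : Measurable (fun y : ℝ => F (a⁻¹ * (y - b))) :=
    hF.comp ((measurable_id.sub_const b).const_mul a⁻¹)
  have hFg : F = fun x => (fun y : ℝ => F (a⁻¹ * (y - b))) (a * x + b) := by
    funext x
    congr 1
    field_simp
    ring
  rw [← restrict_withDensity (hemb.measurable hs)]
  rw [← hemb.restrict_map]
  conv_lhs => rw [hFg]
  rw [map_withDensity_emb hemb hG volume, map_affine a b ha.ne',
    abs_of_pos (inv_pos.mpr ha), withDensity_smul_measure, Measure.restrict_smul,
    restrict_withDensity hs, ← withDensity_smul' _ _ ENNReal.ofReal_ne_top]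
  rfl

lemma xinv (x : ℝ) : x = gr⁻¹ * (gr * x) := by
  rw [← mul_assoc, inv_mul_cancel₀ gr_ne, one_mul]

lemma pre0 : (fun x : ℝ => gr * x + 0) ⁻¹' (Set.Ico 0 1) = Set.Ico 0 gr⁻¹ := by
  ext x
  simp only [Set.mem_preimage, Set.mem_Ico, add_zero]
  constructor
  · rintro ⟨h1, h2⟩
    constructor
    · rw [xinv x]; exact mul_nonneg grinv_nonneg h1
    · calc x = gr⁻¹ * (gr * x) := xinv x
        _ < gr⁻¹ * 1 := mul_lt_mul_of_pos_left h2 grinv_pos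
        _ = gr⁻¹ := mul_one _
  · rintro ⟨h1, h2⟩
    refine ⟨mul_nonneg (le_of_lt gr_pos) h1, ?_⟩
    calc gr * x < gr * gr⁻¹ := mul_lt_mul_of_pos_left h2 gr_pos
      _ = 1 := gr_mul_inv

lemma pre1 : (fun x : ℝ => gr * x + (-1)) ⁻¹' (Set.Ico 0 gr⁻¹) = Set.Ico gr⁻¹ 1 := by
  have hg1 : 1 + gr⁻¹ = gr := by rw [grinv_eq]; ring
  ext x
  simp only [Set.mem_preimage, Set.mem_Ico]
  constructor
  · rintro ⟨h1, h2⟩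
    constructor
    · calc gr⁻¹ = gr⁻¹ * 1 := (mul_one _).symm
        _ ≤ gr⁻¹ * (gr * x) := by
            apply mul_le_mul_of_nonneg_left (by linarith) grinv_nonneg
        _ = x := (xinv x).symm
    · calc x = gr⁻¹ * (gr * x) := xinv x
        _ < gr⁻¹ * gr := by
            apply mul_lt_mul_of_pos_left (by linarith) grinv_pos
        _ = 1 := inv_mul_cancel₀ gr_ne
  · rintro ⟨h1, h2⟩
    have ha : gr * gr⁻¹ ≤ gr * x := mul_le_mul_of_nonneg_left h1 (le_of_lt gr_pos)
    rw [gr_mul_inv] at ha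
    have hb : gr * x < gr * 1 := mul_lt_mul_of_pos_left h2 gr_pos
    rw [mul_one] at hb
    constructor
    · linarith
    · linarith

lemma step (g : ℝ → ℝ) (hg : Measurable g) :
    ((volume.restrict (Set.Ico (0:ℝ) 1)).withDensity
        (fun x => ENNReal.ofReal (g x))).map T
      = (volume.restrict (Set.Ico (0:ℝ) 1)).withDensity
          ((fun y => ENNReal.ofReal gr⁻¹ * ENNReal.ofReal (g (gr⁻¹ * (y - 0)))) +
            (Set.Ico (0:ℝ) gr⁻¹).indicator
              (fun y => ENNReal.ofReal gr⁻¹ * ENNReal.ofReal (g (gr⁻¹ * (y - (-1)))))) := by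
  set F : ℝ → ℝ≥0∞ := fun x => ENNReal.ofReal (g x) with hFdef
  have hF : Measurable F := hg.ennreal_ofReal
  have hsplit : volume.restrict (Set.Ico (0:ℝ) 1)
      = volume.restrict (Set.Ico 0 gr⁻¹) + volume.restrict (Set.Ico gr⁻¹ 1) := by
    rw [← Measure.restrict_union (Set.Ico_disjoint_Ico_same) measurableSet_Ico,
      Set.Ico_union_Ico_eq_Ico grinv_nonneg (le_of_lt grinv_lt_one)]
  have hT0 : Measure.map T ((volume.restrict (Set.Ico 0 gr⁻¹)).withDensity F)
      = Measure.map (fun x : ℝ => gr * x + 0)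
          ((volume.restrict (Set.Ico 0 gr⁻¹)).withDensity F) := by
    apply Measure.map_congr
    have hev : ∀ᵐ x ∂ volume.restrict (Set.Ico 0 gr⁻¹), T x = gr * x + 0 := by
      filter_upwards [ae_restrict_mem measurableSet_Ico] with x hx
      rw [add_zero]; exact T_eq0 hx.1 hx.2
    exact hev.filter_mono (withDensity_absolutelyContinuous _ _).ae_le
  have hT1 : Measure.map T ((volume.restrict (Set.Ico gr⁻¹ 1)).withDensity F)
      = Measure.map (fun x : ℝ => gr * x + (-1))
          ((volume.restrict (Set.Ico gr⁻¹ 1)).withDensity F) := by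
    apply Measure.map_congr
    have hev : ∀ᵐ x ∂ volume.restrict (Set.Ico gr⁻¹ 1), T x = gr * x + (-1) := by
      filter_upwards [ae_restrict_mem measurableSet_Ico] with x hx
      exact T_eq1 hx.1 hx.2
    exact hev.filter_mono (withDensity_absolutelyContinuous _ _).ae_le
  have e0 : Measure.map (fun x : ℝ => gr * x + 0)
      ((volume.restrict (Set.Ico 0 gr⁻¹)).withDensity F)
      = (volume.restrict (Set.Ico (0:ℝ) 1)).withDensity
          (fun y => ENNReal.ofReal gr⁻¹ * F (gr⁻¹ * (y - 0))) := by
    rw [← pre0]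
    exact branch gr 0 gr_pos F hF _ measurableSet_Ico
  have e1 : Measure.map (fun x : ℝ => gr * x + (-1))
      ((volume.restrict (Set.Ico gr⁻¹ 1)).withDensity F)
      = (volume.restrict (Set.Ico (0:ℝ) gr⁻¹)).withDensity
          (fun y => ENNReal.ofReal gr⁻¹ * F (gr⁻¹ * (y - (-1)))) := by
    rw [← pre1]
    exact branch gr (-1) gr_pos F hF _ measurableSet_Ico
  have e1' : (volume.restrict (Set.Ico (0:ℝ) gr⁻¹)).withDensity
        (fun y => ENNReal.ofReal gr⁻¹ * F (gr⁻¹ * (y - (-1))))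
      = (volume.restrict (Set.Ico (0:ℝ) 1)).withDensity
          ((Set.Ico (0:ℝ) gr⁻¹).indicator
            (fun y => ENNReal.ofReal gr⁻¹ * F (gr⁻¹ * (y - (-1))))) := by
    rw [withDensity_indicator measurableSet_Ico,
      Measure.restrict_restrict measurableSet_Ico,
      Set.inter_eq_left.mpr (Set.Ico_subset_Ico_right (le_of_lt grinv_lt_one))]
  have hind : Measurable ((Set.Ico (0:ℝ) gr⁻¹).indicator
      (fun y => ENNReal.ofReal gr⁻¹ * F (gr⁻¹ * (y - (-1))))) := by
    apply Measurable.indicator _ measurableSet_Ico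
    exact (hF.comp ((measurable_id.sub_const _).const_mul _)).const_mul _
  rw [hsplit, withDensity_add_measure, Measure.map_add _ _ T_measurable,
    hT0, hT1, e0, e1, e1', ← withDensity_add_right _ hind, ← hsplit]

theorem pdf_remainder (f : ℝ → ℝ) (hf : Measurable f) (hf0 : ∀ x, 0 ≤ f x)
    (hf1 : (∫ x in Set.Ico (0 : ℝ) 1, f x) = 1) (n : ℕ) (hn : 0 < n) :
    (((volume.restrict (Set.Ico (0 : ℝ) 1)).withDensity
        fun x => ENNReal.ofReal (f x)).map (T^[n])) =
      (volume.restrict (Set.Ico (0 : ℝ) 1)).withDensity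
        fun x => ENNReal.ofReal (evolve n f x) := by
  clear hf1 hn
  induction n with
  | zero =>
    rw [Function.iterate_zero, Measure.map_id, evolve_zero]
  | succ m ih =>
    rw [Function.iterate_succ', ← Measure.map_map T_measurable (T_measurable.iterate m), ih,
      step (evolve m f) (evolve_measurable f hf m)]
    apply withDensity_congr_ae
    filter_upwards [ae_restrict_mem measurableSet_Ico] with x hx
    rw [Pi.add_apply, evolve_succ f m x hx.1 hx.2]
    by_cases hxc : x < gr⁻¹
    · rw [if_pos hxc, Set.indicator_of_mem (Set.mem_Ico.mpr ⟨hx.1, hxc⟩),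
        ENNReal.ofReal_add (mul_nonneg grinv_nonneg (evolve_nonneg f hf0 m _))
          (mul_nonneg grinv_nonneg (evolve_nonneg f hf0 m _)),
        ENNReal.ofReal_mul grinv_nonneg, ENNReal.ofReal_mul grinv_nonneg,
        sub_zero, sub_neg_eq_add]
    · rw [if_neg hxc, Set.indicator_of_notMem
          (fun h => hxc (Set.mem_Ico.mp h).2), add_zero, add_zero,
        ENNReal.ofReal_mul grinv_nonneg, sub_zero]
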